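/- Let ε ∈ ℝ, x, v ∈ ℂ × ℂ with ‖x‖ = 1, set c := ‖v‖, δ := Im⟪x,v⟫, assume D := ε² + 4(c² − ε·δ) > 0, and set θ₊ := (ε + √D)/2, θ₋ := (ε − √D)/2, p₊ := −(θ₋·x + i·v)/(θ₊ − θ₋), p₋ := (θ₊·x + i·v)/(θ₊ − θ₋). Then Re⟪p₊, p₋⟫ = 0, and consequently ‖p₊‖² + ‖p₋‖² = 1 and c² = θ₊²·‖p₊‖² + θ₋²·‖p₋‖². -/

import Mathlib

open Complex

/-- The Hermitian inner product on `ℂ × ℂ`: `⟪x,v⟫ = conj x₁ * v₁ + conj x₂ * v₂`. -/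
noncomputable def hInner (x v : ℂ × ℂ) : ℂ :=
  (starRingEnd ℂ) x.1 * v.1 + (starRingEnd ℂ) x.2 * v.2

/-- The Euclidean norm on `ℂ × ℂ`: `‖x‖ = √(|x₁|² + |x₂|²)`. -/
noncomputable def hNorm (x : ℂ × ℂ) : ℝ :=
  Real.sqrt (Complex.normSq x.1 + Complex.normSq x.2)

/-!
The coefficients satisfy `p₊ + p₋ = x` and `θ₊ p₊ + θ₋ p₋ = -i v`, and
`Re⟪θ₋x + iv, θ₊x + iv⟫ = θ₊θ₋‖x‖² - (θ₊ + θ₋) Im⟪x,v⟫ + ‖v‖²`, which vanishes because `θ±` are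
the roots of `θ² - εθ - (c² - εδ)` and `‖x‖ = 1`. So `p₊` and `p₋` are orthogonal for the real
inner product, and both norm identities are Pythagoras, applied to `p₊ + p₋` and to
`θ₊ p₊ + θ₋ p₋`.
-/

open scoped InnerProductSpace

section GeodesicCoeff

variable {E : Type*} [NormedAddCommGroup E] [InnerProductSpace ℂ E]

theorem re_inner_ofReal_smul_add_I_smul (θ η : ℝ) (x v : E) :
    re ⟪(θ : ℂ) • x + I • v, (η : ℂ) • x + I • v⟫_ℂ
      = θ * η * ‖x‖ ^ 2 - (θ + η) * im ⟪x, v⟫_ℂ + ‖v‖ ^ 2 := by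
  have hself (w : E) : ⟪w, w⟫_ℂ = ((‖w‖ ^ 2 : ℝ) : ℂ) := by
    rw [ofReal_pow]; exact inner_self_eq_norm_sq_to_K w
  simp only [inner_add_left, inner_add_right, inner_smul_left, inner_smul_right, hself,
    conj_ofReal, conj_I, ← inner_conj_symm v x]
  simp only [add_re, mul_re, add_im, mul_im, neg_re, neg_im, I_re, I_im, ofReal_re, ofReal_im,
    conj_re, conj_im]
  ring

theorem norm_add_sq_of_re_inner_eq_zero {p q : E} (h : re ⟪p, q⟫_ℂ = 0) :
    ‖p + q‖ ^ 2 = ‖p‖ ^ 2 + ‖q‖ ^ 2 := by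
  rw [norm_add_sq (𝕜 := ℂ), RCLike.re_to_complex, h, mul_zero, add_zero]

theorem re_inner_ofReal_smul_ofReal_smul (r t : ℝ) (p q : E) :
    re ⟪(r : ℂ) • p, (t : ℂ) • q⟫_ℂ = r * t * re ⟪p, q⟫_ℂ := by
  rw [inner_smul_left, inner_smul_right, conj_ofReal, ← mul_assoc, ← ofReal_mul, re_ofReal_mul]

noncomputable def geodesicCoeffPlus (θp θm : ℝ) (x v : E) : E :=
  -(((θp - θm : ℝ) : ℂ)⁻¹ • ((θm : ℂ) • x + I • v))

noncomputable def geodesicCoeffMinus (θp θm : ℝ) (x v : E) : E :=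
  ((θp - θm : ℝ) : ℂ)⁻¹ • ((θp : ℂ) • x + I • v)

variable {θp θm : ℝ} (x v : E)

theorem geodesicCoeffPlus_add_geodesicCoeffMinus (hne : θp ≠ θm) :
    geodesicCoeffPlus θp θm x v + geodesicCoeffMinus θp θm x v = x := by
  have hs : ((θp - θm : ℝ) : ℂ) ≠ 0 := ofReal_ne_zero.mpr (sub_ne_zero.mpr hne)
  rw [geodesicCoeffPlus, geodesicCoeffMinus, neg_add_eq_sub, ← smul_sub,
    add_sub_add_right_eq_sub, ← sub_smul, ← ofReal_sub, smul_smul, inv_mul_cancel₀ hs, one_smul]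

theorem smul_geodesicCoeffPlus_add_smul_geodesicCoeffMinus (hne : θp ≠ θm) :
    (θp : ℂ) • geodesicCoeffPlus θp θm x v + (θm : ℂ) • geodesicCoeffMinus θp θm x v
      = -(I • v) := by
  have hs : ((θp - θm : ℝ) : ℂ) ≠ 0 := ofReal_ne_zero.mpr (sub_ne_zero.mpr hne)
  have h : ((θp - θm : ℝ) : ℂ)⁻¹ * (θp - θm) = 1 := by rw [← ofReal_sub]; exact inv_mul_cancel₀ hs
  rw [geodesicCoeffPlus, geodesicCoeffMinus]
  linear_combination (norm := module) -h • (I • v)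

theorem re_inner_geodesicCoeffPlus_geodesicCoeffMinus
    (hroot : θp * θm * ‖x‖ ^ 2 - (θp + θm) * im ⟪x, v⟫_ℂ + ‖v‖ ^ 2 = 0) :
    re ⟪geodesicCoeffPlus θp θm x v, geodesicCoeffMinus θp θm x v⟫_ℂ = 0 := by
  rw [geodesicCoeffPlus, geodesicCoeffMinus, inner_neg_left, neg_re, ← ofReal_inv,
    re_inner_ofReal_smul_ofReal_smul, re_inner_ofReal_smul_add_I_smul, mul_comm θm, add_comm θm,
    hroot, mul_zero, neg_zero]

theorem geodesicCoeff_norm_sq (hne : θp ≠ θm)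
    (hroot : θp * θm * ‖x‖ ^ 2 - (θp + θm) * im ⟪x, v⟫_ℂ + ‖v‖ ^ 2 = 0) :
    ‖geodesicCoeffPlus θp θm x v‖ ^ 2 + ‖geodesicCoeffMinus θp θm x v‖ ^ 2 = ‖x‖ ^ 2 ∧
      ‖v‖ ^ 2 = θp ^ 2 * ‖geodesicCoeffPlus θp θm x v‖ ^ 2
        + θm ^ 2 * ‖geodesicCoeffMinus θp θm x v‖ ^ 2 := by
  have horth := re_inner_geodesicCoeffPlus_geodesicCoeffMinus x v hroot
  refine ⟨?_, ?_⟩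
  · rw [← norm_add_sq_of_re_inner_eq_zero horth, geodesicCoeffPlus_add_geodesicCoeffMinus x v hne]
  · have horth' : re ⟪(θp : ℂ) • geodesicCoeffPlus θp θm x v,
        (θm : ℂ) • geodesicCoeffMinus θp θm x v⟫_ℂ = 0 := by
      rw [re_inner_ofReal_smul_ofReal_smul, horth, mul_zero]
    calc ‖v‖ ^ 2 = ‖-(I • v)‖ ^ 2 := by rw [norm_neg, norm_smul, norm_I, one_mul]
      _ = ‖(θp : ℂ) • geodesicCoeffPlus θp θm x v‖ ^ 2
          + ‖(θm : ℂ) • geodesicCoeffMinus θp θm x v‖ ^ 2 := by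
        rw [← smul_geodesicCoeffPlus_add_smul_geodesicCoeffMinus x v hne,
          norm_add_sq_of_re_inner_eq_zero horth']
      _ = _ := by simp only [norm_smul, norm_real, Real.norm_eq_abs, mul_pow, sq_abs]

end GeodesicCoeff

theorem hInner_eq_inner (x v : ℂ × ℂ) :
    hInner x v = ⟪WithLp.toLp 2 x, WithLp.toLp 2 v⟫_ℂ := by
  simp [hInner, WithLp.prod_inner_apply, mul_comm]

theorem hNorm_eq_norm (x : ℂ × ℂ) : hNorm x = ‖WithLp.toLp 2 x‖ := by
  simp [hNorm, WithLp.prod_norm_eq_of_L2, normSq_eq_norm_sq]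

theorem stmt_16 (ε : ℝ) (x v : ℂ × ℂ) (hx : hNorm x = 1)
    (c δ D : ℝ) (hc : c = hNorm v) (hδ : δ = (hInner x v).im)
    (hD : D = ε ^ 2 + 4 * (c ^ 2 - ε * δ)) (hDpos : 0 < D)
    (θp θm : ℝ) (hθp : θp = (ε + Real.sqrt D) / 2) (hθm : θm = (ε - Real.sqrt D) / 2)
    (pp pm : ℂ × ℂ)
    (hpp : pp = -((θp - θm)⁻¹ • (θm • x + Complex.I • v)))
    (hpm : pm = (θp - θm)⁻¹ • (θp • x + Complex.I • v)) :
    (hInner pp pm).re = 0 ∧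
    hNorm pp ^ 2 + hNorm pm ^ 2 = 1 ∧
    c ^ 2 = θp ^ 2 * hNorm pp ^ 2 + θm ^ 2 * hNorm pm ^ 2 := by
  set X := WithLp.toLp 2 x
  set V := WithLp.toLp 2 v
  have hne : θp ≠ θm := by
    rw [hθp, hθm]; linarith [Real.sqrt_pos.mpr hDpos]
  have hroot : θp * θm * ‖X‖ ^ 2 - (θp + θm) * im ⟪X, V⟫_ℂ + ‖V‖ ^ 2 = 0 := by
    rw [← hNorm_eq_norm, ← hNorm_eq_norm, ← hInner_eq_inner, hx, ← hc, ← hδ, hθp, hθm]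
    linear_combination (-1 / 4 : ℝ) * Real.sq_sqrt hDpos.le - (1 / 4 : ℝ) * hD
  have hreal (r : ℝ) (y : ℂ × ℂ) : r • y = (r : ℂ) • y := by ext <;> simp [real_smul]
  have hP : WithLp.toLp 2 pp = geodesicCoeffPlus θp θm X V := by
    simp only [hpp, hreal, WithLp.toLp_neg, WithLp.toLp_smul, WithLp.toLp_add, ofReal_inv,
      geodesicCoeffPlus, X, V]
  have hM : WithLp.toLp 2 pm = geodesicCoeffMinus θp θm X V := by
    simp only [hpm, hreal, WithLp.toLp_smul, WithLp.toLp_add, ofReal_inv, geodesicCoeffMinus, X, V]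
  obtain ⟨hsum, hspeed⟩ := geodesicCoeff_norm_sq X V hne hroot
  simp only [hInner_eq_inner, hNorm_eq_norm, hP, hM, hc]
  refine ⟨re_inner_geodesicCoeffPlus_geodesicCoeffMinus X V hroot, ?_, hspeed⟩
  rw [hsum, ← hNorm_eq_norm, hx, one_pow]
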